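/- Let λ and μ be partitions with μ ⊆ λ and λ_1 = ℓ(λ') = n, and let p ∈ L. Then type(p) = π if and only if Tab(p) ∈ VT(π(λ)/μ). -/

import Mathlib

open scoped Classical

namespace GrothJT

/-! ## Partitions -/

/-- A partition: a weakly decreasing sequence of nonnegative integers with finitely many
nonzero terms.  `part i` is the `i`-th part `λ_i` (indices `i ≥ 1` are the relevant ones). -/
structure Partition where
  part : ℕ → ℕ
  antitone' : ∀ i j : ℕ, i ≤ j → part j ≤ part i
  eventually_zero : ∃ N, ∀ i, N ≤ i → part i = 0

namespace Partition

/-- The conjugate partition: `conj lam j = #{i ≥ 1 : λ_i ≥ j}`. -/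
noncomputable def conj (lam : Partition) (j : ℕ) : ℕ :=
  Set.ncard {i : ℕ | 1 ≤ i ∧ j ≤ lam.part i}

/-- The cells of the Young diagram of a partition (row `i`, column `j`, both `≥ 1`). -/
def cells (lam : Partition) : Set (ℕ × ℕ) :=
  {c | 1 ≤ c.1 ∧ 1 ≤ c.2 ∧ c.2 ≤ lam.part c.1}

/-- `len lam = ℓ(λ)`, the number of nonzero parts. -/
noncomputable def len (lam : Partition) : ℕ := lam.conj 1

/-- The empty partition. -/
protected def zero : Partition :=
  ⟨fun _ => 0, fun _ _ _ => le_rfl, ⟨0, fun _ _ => rfl⟩⟩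

/-- `Sub mu lam` means `μ ⊆ λ`. -/
def Sub (mu lam : Partition) : Prop := ∀ i, mu.part i ≤ lam.part i

end Partition

/-- The cells of the skew shape `λ/μ`. -/
def skewCells (lam mu : Partition) : Set (ℕ × ℕ) := lam.cells \ mu.cells

/-! ## Formal power series in the variables `x = (x_1, x_2, …)` and `t = (t_1, t_2, …)` -/

/-- Variable indices: `Sum.inl i` is the variable `x_i`, and `Sum.inr i` is `t_i`
(only indices `i ≥ 1` are used). -/
abbrev Var := ℕ ⊕ ℕ

abbrev PS := MvPowerSeries Var ℤ

/-- The elementary symmetric function of degree `k` in the set `V` of variables,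
as a formal power series: `e_0 = 1` and `e_k = 0` for `k < 0`. -/
noncomputable def eVar (V : Set Var) (k : ℤ) : PS := fun d =>
  if 0 ≤ k ∧ (∀ v, d v ≤ 1) ∧ (∀ v, d v ≠ 0 → v ∈ V) ∧ ((d.sum fun _ m => m : ℕ) : ℤ) = k
  then 1 else 0

/-- The set of all the variables `x_1, x_2, …`. -/
def xVars : Set Var := {v | ∃ i, 1 ≤ i ∧ v = Sum.inl i}

/-- The set of the variables `t_a, t_{a+1}, …, t_b`. -/
def tRange (a b : ℕ) : Set Var := {v | ∃ i, a ≤ i ∧ i ≤ b ∧ v = Sum.inr i}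

/-! ## Reverse plane partitions and refined dual stable Grothendieck polynomials -/

/-- A reverse plane partition of shape `λ/μ`: a filling of the skew shape with positive
integers, weakly increasing along each row and each column (and `0` outside the shape). -/
structure RPP (lam mu : Partition) where
  entry : ℕ × ℕ → ℕ
  pos : ∀ c ∈ skewCells lam mu, 1 ≤ entry c
  zero_outside : ∀ c, c ∉ skewCells lam mu → entry c = 0
  row_weak : ∀ i j, (i, j) ∈ skewCells lam mu → (i, j + 1) ∈ skewCells lam mu →
    entry (i, j) ≤ entry (i, j + 1)
  col_weak : ∀ i j, (i, j) ∈ skewCells lam mu → (i + 1, j) ∈ skewCells lam mu →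
    entry (i, j) ≤ entry (i + 1, j)

/-- The exponent of the weight monomial `wt(R) = ∏ x_i^{a_i(R)} t_i^{b_i(R)}` of an RPP:
`a_i(R)` is the number of columns containing an `i`, and `b_i(R)` is the number of cells
`(i,j)` with `R(i,j) = R(i+1,j)`. -/
noncomputable def rppExp (lam mu : Partition) (R : RPP lam mu) : Var → ℕ
  | Sum.inl i => Set.ncard {j : ℕ | ∃ r, (r, j) ∈ skewCells lam mu ∧ R.entry (r, j) = i}
  | Sum.inr i => Set.ncard {j : ℕ | (i, j) ∈ skewCells lam mu ∧ (i + 1, j) ∈ skewCells lam mu ∧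
      R.entry (i, j) = R.entry (i + 1, j)}

/-- The refined dual stable Grothendieck polynomial
`g̃_{λ/μ}(x;t) = ∑_{R ∈ RPP(λ/μ)} wt(R)`, as a formal power series: the coefficient of a
monomial is the number of RPPs of shape `λ/μ` with that weight. -/
noncomputable def gt (lam mu : Partition) : PS := fun d =>
  (Set.ncard {R : RPP lam mu | ∀ v, rppExp lam mu R v = d v} : ℤ)

/-- The Jacobi–Trudi matrix whose `(i,j)` entry (1-indexed) is
`e_{λ'_i - μ'_j - i + j}(x_1, x_2, …, t_{μ'_j+1}, …, t_{λ'_i-1})`. -/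
noncomputable def JTmat (lam mu : Partition) (n : ℕ) : Matrix (Fin n) (Fin n) PS :=
  Matrix.of fun i j =>
    eVar (xVars ∪ tRange (mu.conj (j.1 + 1) + 1) (lam.conj (i.1 + 1) - 1))
      ((lam.conj (i.1 + 1) : ℤ) - (mu.conj (j.1 + 1) : ℤ) - (i.1 + 1) + (j.1 + 1))

/-! ## `x`-only versions (dual stable Grothendieck polynomials) -/

/-- The elementary symmetric function `e_k(x_1, x_2, …)` in the variables `x_i`, `i ≥ 1`. -/
noncomputable def eX (k : ℤ) : MvPowerSeries ℕ ℤ := fun d =>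
  if 0 ≤ k ∧ (∀ v, d v ≤ 1) ∧ d 0 = 0 ∧ ((d.sum fun _ m => m : ℕ) : ℤ) = k then 1 else 0

/-- The dual stable Grothendieck polynomial `g_{λ/μ}(x) = ∑_{R ∈ RPP(λ/μ)} ∏ x_i^{a_i(R)}`. -/
noncomputable def gx (lam mu : Partition) : MvPowerSeries ℕ ℤ := fun d =>
  (Set.ncard {R : RPP lam mu |
    ∀ i, Set.ncard {j : ℕ | ∃ r, (r, j) ∈ skewCells lam mu ∧ R.entry (r, j) = i} = d i} : ℤ)

/-- `ibinom m k` is the binomial coefficient `C(m,k)`, with `C(m,k) = δ_{k,0}` for `m < 0`. -/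
def ibinom (m : ℤ) (k : ℕ) : ℤ :=
  if m < 0 then (if k = 0 then 1 else 0) else (m.toNat.choose k : ℤ)


/-! ## Lattice paths in `G = ℕ × ℕ_ω` -/

/-- A path in `G = ℕ × ℕ_ω`: a pair of infinite sequences of points whose consecutive
differences are up steps `(0,1)` or diagonal steps `(1,1)`.  Since every step raises the
height by one, the point at height `m` (resp. `ω + m`) has first coordinate `lo m`
(resp. `hi m`).  Both sequences are eventually constant, and the second one starts at the
limit of the first. -/
structure PathLP where
  lo : ℕ → ℕ
  hi : ℕ → ℕ
  lo_step : ∀ m, lo (m + 1) = lo m ∨ lo (m + 1) = lo m + 1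
  hi_step : ∀ m, hi (m + 1) = hi m ∨ hi (m + 1) = hi m + 1
  lo_eventually : ∃ N, ∀ m, N ≤ m → lo m = lo N
  hi_eventually : ∃ N, ∀ m, N ≤ m → hi m = hi N
  link : ∃ N, (∀ m, N ≤ m → lo m = lo N) ∧ hi 0 = lo N

/-- `PathFromTo p a b`: `p` is a path from `(a, 0)` to `(b, 2ω)`. -/
def PathFromTo (p : PathLP) (a b : ℕ) : Prop :=
  p.lo 0 = a ∧ ∃ N, ∀ m, N ≤ m → p.hi m = b

/-- The exponent of the weight monomial `wt(p) = ∏ x_i^{a_i(p)} t_i^{b_i(p)}` of a path: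
`a_i(p)` (resp. `b_i(p)`) is the number of diagonal steps ending at height `i`
(resp. `ω + i`). -/
noncomputable def pathExp (p : PathLP) : Var → ℕ
  | Sum.inl i => if 1 ≤ i ∧ p.lo i = p.lo (i - 1) + 1 then 1 else 0
  | Sum.inr i => if 1 ≤ i ∧ p.hi i = p.hi (i - 1) + 1 then 1 else 0

/-- `L(i,j)`: the set of paths from `(μ'_i + n - i, 0)` to `(λ'_j + n - j, 2ω)` with no
diagonal step ending at a height in `{ω+1, …, ω+μ'_i}` nor at a height above
`ω + λ'_j - 1`. -/
def Lij (lam mu : Partition) (n i j : ℕ) : Set PathLP :=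
  {p | PathFromTo p (mu.conj i + n - i) (lam.conj j + n - j) ∧
    (∀ m, 1 ≤ m → m ≤ mu.conj i → p.hi m = p.hi (m - 1)) ∧
    (∀ m, 1 ≤ m → lam.conj j ≤ m → p.hi m = p.hi (m - 1))}

/-- An `n`-path. -/
abbrev NPath (n : ℕ) := Fin n → PathLP

/-- `InL lam mu n π p` : the `n`-path `p` lies in `L(π)`,
i.e. `p_i ∈ L(i, π(i))` for all `i` (1-indexed). -/
def InL (lam mu : Partition) (n : ℕ) (π : Equiv.Perm (Fin n)) (p : NPath n) : Prop :=
  ∀ i : Fin n, p i ∈ Lij lam mu n (i.1 + 1) ((π i).1 + 1)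

/-- Two paths have a common point. -/
def Crossing (p q : PathLP) : Prop := (∃ m, p.lo m = q.lo m) ∨ (∃ m, p.hi m = q.hi m)

/-- An `n`-path is noncrossing if no two of its paths share a point. -/
def IsNC (n : ℕ) (p : NPath n) : Prop := ∀ i j : Fin n, i ≠ j → ¬ Crossing (p i) (p j)

/-! ## The blocks `D_k` -/

/-- The set of distinct nonzero parts of `μ`. -/
def partsSet (mu : Partition) : Set ℕ := {v | 1 ≤ v ∧ ∃ i, 1 ≤ i ∧ mu.part i = v}

/-- `r`, the number of distinct nonzero parts of `μ`. -/
noncomputable def rDist (mu : Partition) : ℕ := (partsSet mu).ncard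

/-- `dSeq mu n 0 = d_0 = n`, and for `1 ≤ k ≤ r`, `dSeq mu n k = d_k` is the `k`-th largest
distinct nonzero part of `μ`; for `k > r` it is `0` (in particular `d_{r+1} = 0`). -/
noncomputable def dSeq (mu : Partition) (n : ℕ) : ℕ → ℕ
  | 0 => n
  | (k + 1) => sSup {v | v ∈ partsSet mu ∧ Set.ncard {w ∈ partsSet mu | v ≤ w} = k + 1}

/-- The block `D_k = {d_k + 1, …, d_{k-1}}` of column indices. -/
def Dblock (mu : Partition) (n k : ℕ) : Set ℕ :=
  {j | dSeq mu n k < j ∧ j ≤ dSeq mu n (k - 1)}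

/-- An `n`-path is semi-noncrossing if `p_i` and `p_j` have no common point whenever
`i ≠ j` both lie in some `D_k` with `1 ≤ k ≤ r`. -/
def IsSNC (mu : Partition) (n : ℕ) (p : NPath n) : Prop :=
  ∀ k, 1 ≤ k → k ≤ rDist mu →
    ∀ i j : Fin n, i ≠ j → (i.1 + 1) ∈ Dblock mu n k → (j.1 + 1) ∈ Dblock mu n k →
      ¬ Crossing (p i) (p j)

/-- The set of semi-noncrossing `n`-paths in `L`. -/
def SNCset (lam mu : Partition) (n : ℕ) : Set (NPath n) :=
  {p | (∃ π, InL lam mu n π p) ∧ IsSNC mu n p}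

/-- The (unsigned) weight exponent of an `n`-path: `wt(p_1) ⋯ wt(p_n)`. -/
noncomputable def npathExp (n : ℕ) (p : NPath n) : Var → ℕ :=
  fun v => ∑ i : Fin n, pathExp (p i) v

/-- The signed sum `∑_{p ∈ L^SNC} wt(p)` of the weights of all semi-noncrossing `n`-paths,
as a formal power series: the coefficient of a monomial is `∑_π sign(π) · #{p ∈ L^SNC(π)}`
with the given weight (the type of an `n`-path in `L` is unique). -/
noncomputable def sncSum (lam mu : Partition) (n : ℕ) : PS := fun d =>
  ∑ π : Equiv.Perm (Fin n),
    ((Equiv.Perm.sign π : ℤˣ) : ℤ) *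
      (Set.ncard {p : NPath n | InL lam mu n π p ∧ IsSNC mu n p ∧
        ∀ v, npathExp n p v = d v} : ℤ)

/-- The sum `∑_{p ∈ L(i,j)} wt(p)` as a formal power series. -/
noncomputable def LijSum (lam mu : Partition) (n i j : ℕ) : PS := fun d =>
  (Set.ncard {p ∈ Lij lam mu n i j | ∀ v, pathExp p v = d v} : ℤ)


/-! ## Extended integers and tableaux -/

/-- Extended integers `{1̄ < 2̄ < ⋯ < 1 < 2 < ⋯ < 1* < 2* < ⋯}`:
`bar i` is the negative entry `ī`, `pl i` is the ordinary entry `i`, and `st i` is the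
`ω`-entry `i*`. -/
abbrev Ext := Lex (ℕ ⊕ Lex (ℕ ⊕ ℕ))

def bar (i : ℕ) : Ext := toLex (Sum.inl i)
def pl (i : ℕ) : Ext := toLex (Sum.inr (toLex (Sum.inl i)))
def st (i : ℕ) : Ext := toLex (Sum.inr (toLex (Sum.inr i)))

/-- A tableau: a partial filling of `ℤ⁺ × ℤ⁺` (as a subset of `ℕ × ℕ`) with extended
integers; `none` means the cell is absent. -/
abbrev Tb := ℕ × ℕ → Option Ext

/-- The `k`-th smallest element of a set of extended integers (1-indexed); `none` if there
is no element `e` with exactly `k` elements `≤ e` in the set. -/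
noncomputable def nthSmall (S : Set Ext) (k : ℕ) : Option Ext :=
  if h : ∃ e, e ∈ S ∧ Set.ncard {e' ∈ S | e' ≤ e} = k then some h.choose else none

/-- The set of labels of the diagonal steps of a path: a diagonal step ending at height `m`
is recorded as `pl m`, and one ending at height `ω + m` as `st m`. -/
def labelSet (p : PathLP) : Set Ext :=
  {e | ∃ m, 1 ≤ m ∧ ((p.lo m = p.lo (m - 1) + 1 ∧ e = pl m) ∨
    (p.hi m = p.hi (m - 1) + 1 ∧ e = st m))}

/-- The map `Tab` sending an `n`-path to a tableau: for each `i` and `k ≥ 1`, the cell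
`(α_i + k, i)` contains the ending height of the `k`-th diagonal step of `p_i`. -/
noncomputable def TabU (alpha : ℕ → ℕ) (n : ℕ) (p : NPath n) : Tb := fun c =>
  if h : 1 ≤ c.2 ∧ c.2 ≤ n ∧ alpha c.2 < c.1 then
    nthSmall (labelSet (p ⟨c.2 - 1, by omega⟩)) (c.1 - alpha c.2)
  else none

/-! ## Vertical tableaux -/

/-- A vertical tableau with cell set `S`: entries from `{1 < 2 < ⋯ < 1* < 2* < ⋯}`,
strictly increasing down each column, with support exactly `S`. -/
def IsVTsh (S : Set (ℕ × ℕ)) (T : Tb) : Prop :=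
  (∀ c, (T c).isSome ↔ c ∈ S) ∧
  (∀ c e, T c = some e → ∃ a, 1 ≤ a ∧ (e = pl a ∨ e = st a)) ∧
  (∀ i j e₁ e₂, T (i, j) = some e₁ → T (i + 1, j) = some e₂ → e₁ < e₂)

/-- The cells of the vertical diagram `V(β)/V(α)` (columns `1 ≤ j ≤ n`). -/
def VTcells (alpha beta : ℕ → ℕ) (n : ℕ) : Set (ℕ × ℕ) :=
  {c | 1 ≤ c.2 ∧ c.2 ≤ n ∧ alpha c.2 < c.1 ∧ c.1 ≤ beta c.2}

/-- `L(α,β)`: the set of `n`-paths `(p_1, …, p_n)` where `p_i` is a path from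
`(α_i + n - i, 0)` to `(β_i + n - i, 2ω)`. -/
def Lab (alpha beta : ℕ → ℕ) (n : ℕ) : Set (NPath n) :=
  {p | ∀ i : Fin n, PathFromTo (p i) (alpha (i.1 + 1) + n - (i.1 + 1))
    (beta (i.1 + 1) + n - (i.1 + 1))}

/-- The cells of the vertical diagram `π(λ)`: column `j` (for `1 ≤ j ≤ n`) has the cells
`(i, j)` with `1 ≤ i ≤ λ'_{π(j)} - π(j) + j`. -/
def permLamCells (lam : Partition) (n : ℕ) (π : Equiv.Perm (Fin n)) : Set (ℕ × ℕ) :=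
  {c | ∃ h : 1 ≤ c.2 ∧ c.2 ≤ n, 1 ≤ c.1 ∧
    (c.1 : ℤ) ≤ (lam.conj ((π ⟨c.2 - 1, by omega⟩).1 + 1) : ℤ) -
      ((π ⟨c.2 - 1, by omega⟩).1 + 1) + c.2}

/-- The cells of the vertical diagram `V(μ')` of `μ` (columns `1 ≤ j ≤ n`). -/
def muVertCells (mu : Partition) (n : ℕ) : Set (ℕ × ℕ) :=
  {c | 1 ≤ c.2 ∧ c.2 ≤ n ∧ 1 ≤ c.1 ∧ c.1 ≤ mu.conj c.2}

/-! ## RSE-tableaux (in the unified extended-integer form) -/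

/-- An RSE-tableau of shape `λ` and level `k`, with the entries of `R` taken from
`{1̄ < 2̄ < ⋯ < 1 < 2 < ⋯}` (the set `oRSE_k(λ)`), viewed as a single tableau of shape `λ`
over the extended integers (entries `a` of the elegant tableau `E` written as `a*`):
the support is the Young diagram of `λ`; rows and columns weakly increase; there are no
`ω`-entries in rows `≤ k`; an `ω`-entry `a*` in row `i` satisfies `k ≤ a` and
`1 ≤ a ≤ i - 1` (`E` is elegant with entries `≥ k`); `ω`-entries strictly increase down
columns (`E` is an SSYT); and non-`ω`-entries strictly increase down columns within rows
`≥ k` (rows `≥ k` of `R` form an SSYT). -/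
def IsORSE (lam : Partition) (k : ℕ) (T : Tb) : Prop :=
  (∀ c, (T c).isSome ↔ c ∈ lam.cells) ∧
  (∀ c a, T c = some (bar a) → 1 ≤ a) ∧
  (∀ c a, T c = some (pl a) → 1 ≤ a) ∧
  (∀ i j e₁ e₂, T (i, j) = some e₁ → T (i, j + 1) = some e₂ → e₁ ≤ e₂) ∧
  (∀ i j e₁ e₂, T (i, j) = some e₁ → T (i + 1, j) = some e₂ → e₁ ≤ e₂) ∧
  (∀ i j a, T (i, j) = some (st a) → k < i) ∧
  (∀ i j a, T (i, j) = some (st a) → k ≤ a ∧ 1 ≤ a ∧ a + 1 ≤ i) ∧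
  (∀ i j a b, T (i, j) = some (st a) → T (i + 1, j) = some (st b) → a < b) ∧
  (∀ i j e₁ e₂, k ≤ i → T (i, j) = some e₁ → (¬ ∃ a, e₁ = st a) →
    T (i + 1, j) = some e₂ → (¬ ∃ a, e₂ = st a) → e₁ < e₂)

/-- A skew RSE-tableau of shape `λ/μ` and level `k`, viewed (via the identification filling
every cell of row `i` of `μ` with `ī`) as a tableau of shape `λ` over the extended
integers: an element of `oRSE_k(λ)` whose negative entries are exactly `ī` on row `i` of
`μ`, and whose `ω`-entries `a*` in column `j` moreover satisfy `μ'_j + 1 ≤ a`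
(`E` is `μ`-elegant). -/
def IsSkewRSE (lam mu : Partition) (k : ℕ) (T : Tb) : Prop :=
  IsORSE lam k T ∧
  (∀ i j, (i, j) ∈ mu.cells → T (i, j) = some (bar i)) ∧
  (∀ i j a, T (i, j) = some (bar a) → (i, j) ∈ mu.cells) ∧
  (∀ i j a, T (i, j) = some (st a) → mu.conj j + 1 ≤ a)

/-- `RSE_k(λ/μ)` as a set of tableaux. -/
def RSEset (lam mu : Partition) (k : ℕ) : Set Tb := {T | IsSkewRSE lam mu k T}

/-- The weight exponent of an RSE-tableau `T = (R, E)`: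
`wt(T) = wt(R) · t_E = ∏ x_i^{a_i(R)} t_i^{b_i(R) + c_i(E)}`. -/
noncomputable def rseWtExp (T : Tb) : Var → ℕ
  | Sum.inl i => Set.ncard {j : ℕ | ∃ r, T (r, j) = some (pl i)}
  | Sum.inr i => Set.ncard {j : ℕ | ∃ a, T (i, j) = some (pl a) ∧ T (i + 1, j) = some (pl a)}
      + Set.ncard {c : ℕ × ℕ | T c = some (st i)}

/-- `∑_{T ∈ RSE_k(λ/μ)} wt(T)` as a formal power series. -/
noncomputable def rseSum (lam mu : Partition) (k : ℕ) : PS := fun d =>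
  (Set.ncard {T ∈ RSEset lam mu k | ∀ v, rseWtExp T v = d v} : ℤ)

/-- `∑_{T ∈ S} wt(T)` for a set `S` of RSE-tableaux, as a formal power series. -/
noncomputable def rseImageSum (S : Set Tb) : PS := fun d =>
  (Set.ncard {T ∈ S | ∀ v, rseWtExp T v = d v} : ℤ)

/-- Fill the cells of `μ` with the negative entries `ī` (the identification of a
skew tableau of shape `λ/μ` with a tableau of shape `λ` over the extended integers). -/
noncomputable def addBars (mu : Partition) (T : Tb) : Tb := fun c =>
  if c ∈ mu.cells then some (bar c.1) else T c


/-! ## The Lam–Pylyavskyy maps `π↑` and `π↓` -/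

/-- Update a tableau at one cell. -/
def upd (T : Tb) (c : ℕ × ℕ) (e : Option Ext) : Tb := fun c' => if c' = c then e else T c'

/-- The `R`-part of an RSE-tableau (the non-`ω`-entries). -/
noncomputable def Rpart (T : Tb) : Tb := fun c =>
  (T c).bind fun e => if ∃ a, e = st a then none else some e

/-- The `E`-part of an RSE-tableau (the `ω`-entries). -/
noncomputable def Spart (T : Tb) : Tb := fun c =>
  (T c).bind fun e => if ∃ a, e = st a then some e else none

/-- The column where a non-bumping RSK insertion into row `i` places its entry:
one past the last filled cell of row `i`; if row `i` is empty, aligned with the first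
filled cell of row `i - 1`. -/
noncomputable def placeCol (S : Tb) (i : ℕ) : ℕ :=
  if ∃ j, (S (i, j)).isSome then sSup {j | (S (i, j)).isSome} + 1
  else if ∃ j, (S (i - 1, j)).isSome then sInf {j | (S (i - 1, j)).isSome}
  else 1

/-- RSK row insertion of the entry `a` into the rows `≥ i` of the tableau `S` (with fuel):
in row `i`, the leftmost entry strictly greater than `a` is replaced by `a` and bumped into
the next row; if there is no such entry, `a` is placed at the end of row `i`. -/
noncomputable def insIn : ℕ → Tb → ℕ → Ext → Tb
  | 0, S, _, _ => S
  | (F + 1), S, i, a =>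
    if hb : ∃ j, 1 ≤ j ∧ ∃ b, S (i, j) = some b ∧ a < b then
      match S (i, Nat.find hb) with
      | some b => insIn F (upd S (i, Nat.find hb) (some a)) (i + 1) b
      | none => S
    else upd S (i, placeCol S i) (some a)

/-- The level-decreasing map `π↑` from level `k + 1` to level `k` (with all bounds given by
`N`): the entry `R(k,j)` is novel if `R(k,j) ≠ R(k+1,j)` (in particular if the cell
`(k+1,j)` is absent); row `k` of `R` is deleted and the rows `≥ k + 1` are shifted up by
one; the novel entries are RSK-inserted, in weakly increasing order (= increasing column
order), into the rows `≥ k`; the cells of the horizontal strip `sh(R)/sh(R')` left empty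
are added to `E` filled with `k` (i.e. with `k*`). -/
noncomputable def piUp (N k : ℕ) (T : Tb) : Tb :=
  let R := Rpart T
  let R1 : Tb := fun c => if c.1 < k then R c else R (c.1 + 1, c.2)
  let cols := (List.range (N + 1)).filter fun j =>
    decide (1 ≤ j ∧ (R (k, j)).isSome ∧ R (k, j) ≠ R (k + 1, j))
  let R2 := cols.foldl (fun S j =>
    match R (k, j) with
    | some a => insIn N S k a
    | none => S) R1
  fun c =>
    match R2 c with
    | some e => some e
    | none =>
      match Spart T c with
      | some e => some e
      | none => if (R c).isSome then some (st k) else none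

/-- `piUpPow N k` is the `k`-fold application `π↑^k` starting from level `k + 1`,
i.e. `π↑ (level k+1 → k)` first, then down to level `1`. -/
noncomputable def piUpPow (N : ℕ) : ℕ → Tb → Tb
  | 0 => id
  | (k + 1) => fun T => piUpPow N k (piUp N (k + 1) T)

/-- Reverse RSK row insertion of the value `v` into row `i` (with fuel), continuing upward
until a value is bumped out of row `k`: in row `i` the rightmost entry `a < v` is replaced
by `v`, and `a` is carried to row `i - 1`; the result is the updated tableau together with
the column and the value bumped out of row `k`. -/
noncomputable def revIns : ℕ → ℕ → ℕ → Tb → Ext → Tb × ℕ × Ext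
  | 0, _, _, S, v => (S, 0, v)
  | (F + 1), k, i, S, v =>
    let j0 := sSup {j | ∃ a, S (i, j) = some a ∧ a < v}
    match S (i, j0) with
    | some a =>
      if a < v then
        if i ≤ k then (upd S (i, j0) (some v), j0, a)
        else revIns F k (i - 1) (upd S (i, j0) (some v)) a
      else (S, 0, v)
    | none => (S, 0, v)

/-- Start the reverse RSK algorithm on the rows `≥ k` of `S` from the last (bottom) cell of
column `c`: that cell is removed and its value is reverse-inserted into the row above. -/
noncomputable def revStart (F k : ℕ) (S : Tb) (c : ℕ) : Tb × ℕ × Ext :=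
  let i0 := sSup {i | k ≤ i ∧ (S (i, c)).isSome}
  match S (i0, c) with
  | some v =>
    if i0 ≤ k then (upd S (i0, c) none, c, v)
    else revIns F k (i0 - 1) (upd S (i0, c) none) v
  | none => (S, 0, pl 0)

/-- The level-increasing map `π↓` from level `k` to level `k + 1` (with all bounds given by
`N`): for each column `c` (rightmost first) of `rows ≥ k` of `R` whose column of `E`
contains no `k`, the reverse RSK algorithm is applied starting from the last cell of column
`c`, bumping a value `a_i` out of row `k` at some column `b_i`; then the rows `≥ k` are
shifted down by one, and row `k` is refilled: `a_i` at column `b_i`, and the entry directly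
below in every other (originally filled) column; all entries `k` of `E` are removed. -/
noncomputable def piDown (N k : ℕ) (T : Tb) : Tb :=
  let R := Rpart T
  let cols := (List.range (N + 1)).filter fun j =>
    decide (1 ≤ j ∧ (∃ i, k ≤ i ∧ (R (i, j)).isSome) ∧ ¬ ∃ i, T (i, j) = some (st k))
  let step : ℕ → Tb × (ℕ → Option Ext) → Tb × (ℕ → Option Ext) := fun c SO =>
    let res := revStart N k SO.1 c
    (res.1, fun j => if j = res.2.1 then some res.2.2 else SO.2 j)
  let RO := cols.foldr step (R, fun _ => none)
  let R2 : Tb := fun c =>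
    if c.1 < k then RO.1 c
    else if c.1 = k then
      (if (RO.2 c.2).isSome then RO.2 c.2
       else if (R (k, c.2)).isSome then RO.1 (k, c.2) else none)
    else RO.1 (c.1 - 1, c.2)
  fun c =>
    match R2 c with
    | some e => some e
    | none =>
      match T c with
      | some e => if ∃ a, e = st a ∧ a ≠ k then some e else none
      | none => none

/-! ## Column restrictions and concatenation -/

/-- The restriction `col_{≤ s}` of a tableau to its columns `1, …, s`. -/
def colLE (s : ℕ) (T : Tb) : Tb := fun c => if c.2 ≤ s then T c else none

/-- The restriction `col_{≥ s}` of a tableau to its columns `s, s + 1, …`. -/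
def colGE (s : ℕ) (T : Tb) : Tb := fun c => if s ≤ c.2 then T c else none

/-- Concatenation `T₁ ⊔ T₂` of tableaux (with disjoint column supports, kept at their
absolute positions). -/
def hcat (T₁ T₂ : Tb) : Tb := fun c => (T₁ c).orElse fun _ => T₂ c

/-- A reverse plane partition over the extended integers: entries weakly increase along
rows and columns. -/
def IsRPPE (T : Tb) : Prop :=
  (∀ i j e₁ e₂, T (i, j) = some e₁ → T (i, j + 1) = some e₂ → e₁ ≤ e₂) ∧
  (∀ i j e₁ e₂, T (i, j) = some e₁ → T (i + 1, j) = some e₂ → e₁ ≤ e₂)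

/-- `T₁ ≤ T₂` means the concatenation `T₁ ⊔ T₂` is an RPP over the extended integers. -/
def leTab (T₁ T₂ : Tb) : Prop := IsRPPE (hcat T₁ T₂)

/-- A bound large enough for all bumping processes inside the shape `λ`. -/
noncomputable def Nbound (lam : Partition) : ℕ := lam.part 1 + lam.len + 2

/-!
Column `j` of `Tab(p)` lists the ending heights of the diagonal steps of `p_j` in increasing
order, so `Tab(p)` is always column-strict and its shape is read off from the endpoints of the
paths: for `p ∈ L(σ)` it is `σ(λ)/μ`. Hence `Tab(p) ∈ VT(π(λ)/μ)` iff `π(λ)/μ = σ(λ)/μ`.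
Column `j` of `π(λ)` has length `λ'_{π(j)} - π(j) + j`, and `k ↦ λ'_k - k` is strictly
decreasing, so `π(λ)/μ ⊆ σ(λ)/μ` forces `σ(j) ≤ π(j)` for every `j`, i.e. `π = σ`.
-/

def ascents (f : ℕ → ℕ) : Set ℕ := {m | 1 ≤ m ∧ f m = f (m - 1) + 1}

lemma card_filter_ascents_add {f : ℕ → ℕ} (hf : ∀ m, f (m + 1) = f m ∨ f (m + 1) = f m + 1)
    (N : ℕ) : ((Finset.range N).filter fun m => f (m + 1) = f m + 1).card + f 0 = f N := by
  induction N with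
  | zero => simp
  | succ N ih =>
    rw [Finset.range_add_one, Finset.filter_insert]
    rcases hf N with h | h
    · rw [if_neg (by omega), h, ih]
    · rw [if_pos h, Finset.card_insert_of_notMem (by simp), h]
      omega

lemma ascents_eq_image {f : ℕ → ℕ} {N : ℕ} (hN : ∀ m, N ≤ m → f m = f N) :
    ascents f = ↑(((Finset.range N).filter fun m => f (m + 1) = f m + 1).image (· + 1)) := by
  ext m
  simp only [ascents, Set.mem_ofPred_eq, Finset.coe_image, Set.mem_image, Finset.mem_coe,
    Finset.mem_filter, Finset.mem_range]
  constructor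
  · rintro ⟨hm, hf⟩
    refine ⟨m - 1, ⟨?_, by rwa [Nat.sub_add_cancel hm]⟩, by omega⟩
    by_contra hmN
    have h₁ := hN m (by omega)
    have h₂ := hN (m - 1) (by omega)
    omega
  · rintro ⟨m, ⟨-, hf⟩, rfl⟩
    exact ⟨by omega, hf⟩

lemma ascents_finite {f : ℕ → ℕ} {N : ℕ} (hN : ∀ m, N ≤ m → f m = f N) :
    (ascents f).Finite := by
  rw [ascents_eq_image hN]
  exact Finset.finite_toSet _

lemma ncard_ascents_add {f : ℕ → ℕ} (hf : ∀ m, f (m + 1) = f m ∨ f (m + 1) = f m + 1)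
    {N : ℕ} (hN : ∀ m, N ≤ m → f m = f N) : (ascents f).ncard + f 0 = f N := by
  rw [ascents_eq_image hN, Set.ncard_coe_finset,
    Finset.card_image_of_injective _ (add_left_injective 1)]
  exact card_filter_ascents_add hf N

lemma labelSet_eq (p : PathLP) : labelSet p = pl '' ascents p.lo ∪ st '' ascents p.hi := by
  ext e
  simp only [labelSet, ascents, Set.mem_ofPred_eq, Set.mem_union, Set.mem_image]
  constructor
  · rintro ⟨m, hm, ⟨h, rfl⟩ | ⟨h, rfl⟩⟩
    exacts [Or.inl ⟨m, ⟨hm, h⟩, rfl⟩, Or.inr ⟨m, ⟨hm, h⟩, rfl⟩]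
  · rintro (⟨m, ⟨hm, h⟩, rfl⟩ | ⟨m, ⟨hm, h⟩, rfl⟩)
    exacts [⟨m, hm, Or.inl ⟨h, rfl⟩⟩, ⟨m, hm, Or.inr ⟨h, rfl⟩⟩]

lemma pl_injective : Function.Injective pl := fun a b h => by simpa [pl] using h

lemma st_injective : Function.Injective st := fun a b h => by simpa [st] using h

lemma disjoint_range_pl_st : Disjoint (Set.range pl) (Set.range st) := by
  rw [Set.disjoint_left]
  rintro _ ⟨a, rfl⟩ ⟨b, h⟩
  simp [pl, st] at h

lemma labelSet_finite (p : PathLP) : (labelSet p).Finite := by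
  obtain ⟨Nlo, hlo⟩ := p.lo_eventually
  obtain ⟨Nhi, hhi⟩ := p.hi_eventually
  rw [labelSet_eq]
  exact ((ascents_finite hlo).image pl).union ((ascents_finite hhi).image st)

lemma PathFromTo.ncard_labelSet_add {p : PathLP} {a b : ℕ} (h : PathFromTo p a b) :
    (labelSet p).ncard + a = b := by
  obtain ⟨rfl, Nhi, hhi⟩ := h
  obtain ⟨Nlo, hlo, hlink⟩ := p.link
  have hstable : ∀ m, Nhi ≤ m → p.hi m = p.hi Nhi := fun m hm => by
    rw [hhi m hm, hhi Nhi le_rfl]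
  have hdisj : Disjoint (pl '' ascents p.lo) (st '' ascents p.hi) :=
    disjoint_range_pl_st.mono (Set.image_subset_range _ _) (Set.image_subset_range _ _)
  have hcard_lo := ncard_ascents_add p.lo_step hlo
  have hcard_hi := ncard_ascents_add p.hi_step hstable
  rw [labelSet_eq, Set.ncard_union_eq hdisj ((ascents_finite hlo).image pl)
      ((ascents_finite hstable).image st), Set.ncard_image_of_injective _ pl_injective,
    Set.ncard_image_of_injective _ st_injective, ← hhi Nhi le_rfl]
  omega

section Rank

variable {α : Type*} [LinearOrder α] {S : Set α}

noncomputable def rankIn (S : Set α) (e : α) : ℕ := {e' ∈ S | e' ≤ e}.ncard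

lemma rankIn_mono (hS : S.Finite) : Monotone (rankIn S) := fun _ _ h =>
  Set.ncard_le_ncard (fun _ hx => ⟨hx.1, hx.2.trans h⟩) (hS.subset (Set.sep_subset _ _))

lemma rankIn_lt_rankIn (hS : S.Finite) {e₁ e₂ : α} (he₂ : e₂ ∈ S) (h : e₁ < e₂) :
    rankIn S e₁ < rankIn S e₂ :=
  Set.ncard_lt_ncard
    ⟨fun _ hx => ⟨hx.1, hx.2.trans h.le⟩, fun hsub => (hsub ⟨he₂, le_rfl⟩).2.not_gt h⟩
    (hS.subset (Set.sep_subset _ _))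

lemma lt_of_rankIn_lt (hS : S.Finite) {e₁ e₂ : α} (h : rankIn S e₁ < rankIn S e₂) :
    e₁ < e₂ :=
  lt_of_not_ge fun h' => (rankIn_mono hS h').not_gt h

lemma rankIn_mem_Icc (hS : S.Finite) {e : α} (he : e ∈ S) :
    rankIn S e ∈ Finset.Icc 1 S.ncard :=
  Finset.mem_Icc.2
    ⟨(Set.ncard_pos (hS.subset (Set.sep_subset _ _))).2 ⟨e, he, le_rfl⟩,
      Set.ncard_le_ncard (Set.sep_subset _ _) hS⟩

/-- The rank map `S → {1, …, |S|}` is injective, hence surjective. -/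
lemma exists_rankIn_eq (hS : S.Finite) {k : ℕ} (hk : k ∈ Finset.Icc 1 S.ncard) :
    ∃ e ∈ S, rankIn S e = k := by
  have hinj : Set.InjOn (rankIn S) S := fun e₁ he₁ e₂ he₂ h => by
    rcases lt_trichotomy e₁ e₂ with hlt | heq | hlt
    · exact absurd h (rankIn_lt_rankIn hS he₂ hlt).ne
    · exact heq
    · exact absurd h (rankIn_lt_rankIn hS he₁ hlt).ne'
  obtain ⟨e, he, rfl⟩ := Finset.surjOn_of_injOn_of_card_le (s := hS.toFinset) (rankIn S)
    (fun e he => rankIn_mem_Icc hS (hS.mem_toFinset.1 he)) (by simpa using hinj)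
    (by simp [Set.ncard_eq_toFinset_card S hS]) hk
  exact ⟨e, hS.mem_toFinset.1 he, rfl⟩

end Rank

lemma nthSmall_eq_some {S : Set Ext} {k : ℕ} {e : Ext} (h : nthSmall S k = some e) :
    e ∈ S ∧ rankIn S e = k := by
  unfold nthSmall at h
  split_ifs at h with hex
  exact Option.some_injective _ h ▸ hex.choose_spec

lemma isSome_nthSmall_iff {S : Set Ext} (hS : S.Finite) {k : ℕ} :
    (nthSmall S k).isSome ↔ k ∈ Finset.Icc 1 S.ncard := by
  unfold nthSmall
  split_ifs with hex
  · obtain ⟨e, he, rfl⟩ := hex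
    simp only [Option.isSome_some, true_iff]
    exact rankIn_mem_Icc hS he
  · simpa using fun hk => hex (exists_rankIn_eq hS hk)

section Tab

variable {alpha : ℕ → ℕ} {n : ℕ} {p : NPath n}

lemma TabU_succ {j : ℕ} (hj : j < n) (r : ℕ) : TabU alpha n p (r, j + 1) =
    if alpha (j + 1) < r then nthSmall (labelSet (p ⟨j, hj⟩)) (r - alpha (j + 1)) else none := by
  unfold TabU
  by_cases hr : alpha (j + 1) < r
  · rw [dif_pos ⟨Nat.le_add_left 1 j, hj, hr⟩, if_pos hr]
    rfl
  · rw [dif_neg (fun h => hr h.2.2), if_neg hr]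

lemma TabU_eq_none {r j : ℕ} (hj : ¬ (1 ≤ j ∧ j ≤ n)) : TabU alpha n p (r, j) = none :=
  dif_neg fun h => hj ⟨h.1, h.2.1⟩

lemma isSome_TabU_succ_iff (i : Fin n) (r : ℕ) : (TabU alpha n p (r, i.1 + 1)).isSome ↔
    alpha (i.1 + 1) < r ∧ r ≤ alpha (i.1 + 1) + (labelSet (p i)).ncard := by
  rw [TabU_succ i.2, Fin.eta]
  split_ifs with hr
  · rw [isSome_nthSmall_iff (labelSet_finite _), Finset.mem_Icc]
    omega
  · simp [hr]

lemma exists_of_TabU_eq_some {r j : ℕ} {e : Ext} (h : TabU alpha n p (r, j) = some e) :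
    ∃ j' : ℕ, ∃ hj : j' < n, j = j' + 1 ∧ alpha j < r ∧
      nthSmall (labelSet (p ⟨j', hj⟩)) (r - alpha j) = some e := by
  by_cases hj : 1 ≤ j ∧ j ≤ n
  · obtain ⟨j', rfl⟩ : ∃ j', j = j' + 1 := ⟨j - 1, by omega⟩
    have hj' : j' < n := by omega
    rw [TabU_succ hj'] at h
    split_ifs at h with hr
    exact ⟨j', hj', rfl, hr, h⟩
  · simp [TabU_eq_none hj] at h

lemma TabU_entry {c : ℕ × ℕ} {e : Ext} (h : TabU alpha n p c = some e) :
    ∃ a, 1 ≤ a ∧ (e = pl a ∨ e = st a) := by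
  obtain ⟨j', hj, -, -, he⟩ := exists_of_TabU_eq_some h
  obtain ⟨m, hm, ⟨-, rfl⟩ | ⟨-, rfl⟩⟩ := (nthSmall_eq_some he).1
  exacts [⟨m, hm, Or.inl rfl⟩, ⟨m, hm, Or.inr rfl⟩]

lemma TabU_lt_of_succ {i j : ℕ} {e₁ e₂ : Ext} (h₁ : TabU alpha n p (i, j) = some e₁)
    (h₂ : TabU alpha n p (i + 1, j) = some e₂) : e₁ < e₂ := by
  obtain ⟨j', hj, rfl, hi, he₁⟩ := exists_of_TabU_eq_some h₁
  rw [TabU_succ hj, if_pos (by omega)] at h₂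
  have hrank₁ := (nthSmall_eq_some he₁).2
  have hrank₂ := (nthSmall_eq_some h₂).2
  exact lt_of_rankIn_lt (labelSet_finite (p ⟨j', hj⟩)) (by omega)

lemma isVTsh_TabU_iff {S : Set (ℕ × ℕ)} :
    IsVTsh S (TabU alpha n p) ↔ {c | (TabU alpha n p c).isSome} = S := by
  refine ⟨fun h => Set.ext h.1, ?_⟩
  rintro rfl
  exact ⟨fun _ => Iff.rfl, fun _ _ => TabU_entry, fun _ _ _ _ => TabU_lt_of_succ⟩

end Tab

lemma _root_.Equiv.Perm.eq_of_forall_le {n : ℕ} {π σ : Equiv.Perm (Fin n)} (h : ∀ i, σ i ≤ π i) :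
    π = σ := by
  have hsum : ∑ i, (σ i : ℕ) = ∑ i, (π i : ℕ) := by
    rw [Equiv.sum_comp σ (fun i => (i : ℕ)), Equiv.sum_comp π (fun i => (i : ℕ))]
  have hval := (Finset.sum_eq_sum_iff_of_le fun i _ => Fin.le_def.1 (h i)).1 hsum
  exact Equiv.ext fun i => Fin.ext (hval i (Finset.mem_univ i)).symm

lemma Partition.conj_le_conj (lam : Partition) {j j' : ℕ} (hj : 1 ≤ j) (hjj' : j ≤ j') :
    lam.conj j' ≤ lam.conj j := by
  obtain ⟨N, hN⟩ := lam.eventually_zero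
  refine Set.ncard_le_ncard (fun i hi => ⟨hi.1, hjj'.trans hi.2⟩) ?_
  refine (Set.finite_Iio N).subset fun i hi => ?_
  by_contra hiN
  have := hN i (not_lt.1 hiN)
  exact absurd hi.2 (by omega)

section PermLam

variable {lam mu : Partition} {n : ℕ} {π σ : Equiv.Perm (Fin n)}

/-- The length of column `i + 1` of `π(λ)`. -/
noncomputable def permLamCol (lam : Partition) (π : Equiv.Perm (Fin n)) (i : Fin n) : ℤ :=
  lam.conj ((π i).1 + 1) - ((π i).1 + 1) + (i.1 + 1)

lemma mem_permLamCells_succ_iff {r : ℕ} (i : Fin n) :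
    (r, i.1 + 1) ∈ permLamCells lam n π ↔ 1 ≤ r ∧ r ≤ permLamCol lam π i :=
  ⟨fun ⟨_, h⟩ => h, fun h => ⟨⟨Nat.le_add_left 1 i.1, i.2⟩, h⟩⟩

lemma mem_muVertCells_succ_iff {r : ℕ} (i : Fin n) :
    (r, i.1 + 1) ∈ muVertCells mu n ↔ 1 ≤ r ∧ r ≤ mu.conj (i.1 + 1) :=
  ⟨fun h => h.2.2, fun h => ⟨Nat.le_add_left 1 i.1, i.2, h⟩⟩

/-- Since `k ↦ λ'_k - k` is strictly decreasing, so is the column length in `π(i)`. -/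
lemma le_of_permLamCol_le {i : Fin n} (h : permLamCol lam π i ≤ permLamCol lam σ i) :
    σ i ≤ π i := by
  by_contra! hlt
  rw [Fin.lt_def] at hlt
  have := lam.conj_le_conj (j := (π i).1 + 1) (j' := (σ i).1 + 1) (by omega) (by omega)
  unfold permLamCol at h
  omega

lemma permLamCol_le_of_subset {i : Fin n} (hμ : (mu.conj (i.1 + 1) : ℤ) ≤ permLamCol lam σ i)
    (h : permLamCells lam n π \ muVertCells mu n ⊆ permLamCells lam n σ \ muVertCells mu n) :
    permLamCol lam π i ≤ permLamCol lam σ i := by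
  by_contra! hlt
  obtain ⟨r, hr⟩ : ∃ r : ℕ, (r : ℤ) = permLamCol lam π i := ⟨_, Int.toNat_of_nonneg (by omega)⟩
  have hcell : (r, i.1 + 1) ∈ permLamCells lam n π \ muVertCells mu n :=
    ⟨(mem_permLamCells_succ_iff i).2 ⟨by omega, hr.le⟩,
      fun hmu => by have := ((mem_muVertCells_succ_iff i).1 hmu).2; omega⟩
  have := ((mem_permLamCells_succ_iff i).1 (h hcell).1).2
  omega

lemma perm_eq_of_permLamCells_diff_subset
    (hμ : ∀ i, (mu.conj (i.1 + 1) : ℤ) ≤ permLamCol lam σ i)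
    (h : permLamCells lam n π \ muVertCells mu n ⊆ permLamCells lam n σ \ muVertCells mu n) :
    π = σ :=
  Equiv.Perm.eq_of_forall_le fun _ => le_of_permLamCol_le (permLamCol_le_of_subset (hμ _) h)

end PermLam

namespace InL

variable {lam mu : Partition} {n : ℕ} {π : Equiv.Perm (Fin n)} {p : NPath n}

lemma ncard_labelSet (h : InL lam mu n π p) (i : Fin n) :
    ((labelSet (p i)).ncard : ℤ) = permLamCol lam π i - mu.conj (i.1 + 1) := by
  have hcard := (h i).1.ncard_labelSet_add
  have := i.2
  have := (π i).2
  unfold permLamCol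
  omega

lemma conj_le_permLamCol (h : InL lam mu n π p) (i : Fin n) :
    (mu.conj (i.1 + 1) : ℤ) ≤ permLamCol lam π i := by
  have := h.ncard_labelSet i
  omega

lemma support_TabU (h : InL lam mu n π p) :
    {c | (TabU mu.conj n p c).isSome} = permLamCells lam n π \ muVertCells mu n := by
  ext ⟨r, j⟩
  by_cases hj : 1 ≤ j ∧ j ≤ n
  · obtain ⟨i, rfl⟩ : ∃ i : Fin n, j = i.1 + 1 := ⟨⟨j - 1, by omega⟩, by simp only; omega⟩
    have hcard := h.ncard_labelSet i
    simp only [Set.mem_ofPred_eq, Set.mem_sdiff, isSome_TabU_succ_iff i,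
      mem_permLamCells_succ_iff i, mem_muVertCells_succ_iff i]
    omega
  · simp only [Set.mem_ofPred_eq, TabU_eq_none hj, Option.isSome_none, Bool.false_eq_true,
      false_iff]
    exact fun hc => hj hc.1.1

end InL

theorem type_eq_iff_tab_mem_VT_general (lam mu : Partition) (n : ℕ) (p : NPath n)
    (hp : ∃ π, InL lam mu n π p) (π : Equiv.Perm (Fin n)) :
    InL lam mu n π p ↔
      IsVTsh (permLamCells lam n π \ muVertCells mu n) (TabU mu.conj n p) := by
  obtain ⟨σ, hσ⟩ := hp
  rw [isVTsh_TabU_iff, hσ.support_TabU]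
  refine ⟨fun hπ => hσ.support_TabU.symm.trans hπ.support_TabU, fun h => ?_⟩
  rwa [perm_eq_of_permLamCells_diff_subset hσ.conj_le_permLamCol h.ge]

/-- **Lemma: for `p ∈ L`, `type(p) = π` iff `Tab(p) ∈ VT(π(λ)/μ)`.**
Here `Tab` is taken with the column offsets `α_j = μ'_j`, and `VT(π(λ)/μ)` is the set of
vertical tableaux whose cell set is the vertical diagram `π(λ)` minus `V(μ')`. -/
theorem type_eq_iff_tab_mem_VT (lam mu : Partition) (n : ℕ) (hsub : Partition.Sub mu lam)
    (hn : lam.part 1 = n) (p : NPath n) (hp : ∃ π, InL lam mu n π p)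
    (π : Equiv.Perm (Fin n)) :
    InL lam mu n π p ↔
      IsVTsh (permLamCells lam n π \ muVertCells mu n) (TabU mu.conj n p) :=
  type_eq_iff_tab_mem_VT_general lam mu n p hp π

end GrothJT
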